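/- Let α ∈ (0,1), m ∈ ℕ even, p = αm, n ∈ [0, p-2] with p - n > 1 and m - (n+1)/α > 0. Then there exists K > 0 such that for all x ∈ ℝ, ∫_0^∞ v^n/(1 + |x|^m + v^p) dv ≤ K/(1 + |x|^{m-(n+1)/α}). -/

import Mathlib

open MeasureTheory Set Real

/-- Weighted moment bound: for `α ∈ (0,1)`, even `m`, `p = αm`, `n ∈ [0,p-2]`
with `p - n > 1` and `m - (n+1)/α > 0`, there is `K > 0` such that for all `x`,
`∫_0^∞ v^n/(1+|x|^m+v^p) dv ≤ K/(1+|x|^{m-(n+1)/α})`. -/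
theorem stmt_9 (α : ℝ) (hα : α ∈ Set.Ioo (0:ℝ) 1) (m : ℕ) (hm : Even m)
    (p n : ℝ) (hp : p = α * m) (hn : n ∈ Set.Icc (0:ℝ) (p - 2))
    (hpn : 1 < p - n) (hmn : 0 < (m:ℝ) - (n + 1)/α) :
    ∃ K > (0:ℝ), ∀ x : ℝ,
      (∫ v in Set.Ioi (0:ℝ), v ^ n / (1 + |x| ^ m + v ^ p)) ≤
        K / (1 + |x| ^ ((m:ℝ) - (n + 1)/α)) := by
  obtain ⟨hα0, hα1⟩ := hα
  obtain ⟨hn0, hn2⟩ := hn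
  have hp0 : 0 < p := by linarith
  have hm0 : 0 < (m:ℝ) := by
    by_contra h
    push_neg at h
    have : (m:ℝ) = 0 := le_antisymm h (Nat.cast_nonneg m)
    rw [this, mul_zero] at hp; linarith
  set β : ℝ := (m:ℝ) - (n + 1)/α with hβ
  set C : ℝ := ∫ x in Ioi (0:ℝ), x ^ n / (1 + x ^ p) with hC
  have hC0 : 0 ≤ C := by
    apply setIntegral_nonneg measurableSet_Ioi
    intro x hx
    have hx0 : (0:ℝ) < x := hx
    positivity
  have hexp : (n + 1) / p - 1 = -(β / m) := by
    rw [hp, hβ]; field_simp; ring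
  have hexp2 : (m:ℝ) * (β / m) = β := by field_simp
  refine ⟨2 * C + 1, by positivity, fun x => ?_⟩
  set A : ℝ := 1 + |x| ^ m with hA
  have hA1 : 1 ≤ A := by
    have : 0 ≤ |x| ^ m := pow_nonneg (abs_nonneg x) m
    rw [hA]; linarith
  have hA0 : 0 < A := lt_of_lt_of_le one_pos hA1
  set c : ℝ := A ^ (1/p) with hc
  have hc0 : 0 < c := rpow_pos_of_pos hA0 _
  have hcp : c ^ p = A := by
    rw [hc, ← Real.rpow_mul hA0.le, one_div_mul_cancel hp0.ne', rpow_one]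
  have h1 := integral_comp_mul_left_Ioi (fun v : ℝ => v ^ n / (A + v ^ p)) 0 hc0
  rw [mul_zero] at h1
  have h2 : (∫ y in Ioi (0:ℝ), (c * y) ^ n / (A + (c * y) ^ p))
      = (c ^ n / A) * C := by
    rw [hC, ← integral_const_mul]
    apply setIntegral_congr_fun measurableSet_Ioi
    intro y hy
    have hy0 : (0:ℝ) < y := hy
    have e1 : (c * y) ^ n = c ^ n * y ^ n := mul_rpow hc0.le hy0.le
    have e2 : (c * y) ^ p = A * y ^ p := by
      rw [mul_rpow hc0.le hy0.le, hcp]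
    simp only [e1, e2]
    have hyp : (0:ℝ) < 1 + y ^ p := by positivity
    field_simp
  have key : (∫ v in Ioi (0:ℝ), v ^ n / (A + v ^ p)) = C * (A ^ (β / m))⁻¹ := by
    have h3 : (∫ v in Ioi (0:ℝ), v ^ n / (A + v ^ p))
        = c * ((c ^ n / A) * C) := by
      rw [← h2]
      rw [h1, smul_eq_mul, ← mul_assoc, mul_inv_cancel₀ hc0.ne', one_mul]
    rw [h3]
    have e3 : c * (c ^ n / A * C) = c ^ (n + 1) / A * C := by
      rw [Real.rpow_add hc0, rpow_one]; ring
    rw [e3]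
    have e4 : c ^ (n + 1) = A ^ ((n + 1) / p) := by
      rw [hc, ← Real.rpow_mul hA0.le]
      congr 1
      field_simp
    rw [e4]
    have e5 : A ^ ((n + 1) / p) / A = (A ^ (β / m))⁻¹ := by
      have h5 := Real.rpow_sub hA0 ((n + 1) / p) 1
      rw [rpow_one] at h5
      rw [← h5, hexp, Real.rpow_neg hA0.le]
    rw [e5]; ring
  have hβm : 0 < β / (m:ℝ) := div_pos hmn hm0
  have hABm1 : 1 ≤ A ^ (β / m) := Real.one_le_rpow hA1 hβm.le
  have hge : |x| ^ β ≤ A ^ (β / m) := by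
    have h4 : |x| ^ β = (|x| ^ m) ^ (β / (m:ℝ)) := by
      rw [← Real.rpow_natCast |x| m, ← Real.rpow_mul (abs_nonneg x), hexp2]
    rw [h4]
    apply Real.rpow_le_rpow (by positivity) _ hβm.le
    rw [hA]; linarith
  have hden : (0:ℝ) < 1 + |x| ^ β := by
    have : 0 ≤ |x| ^ β := Real.rpow_nonneg (abs_nonneg x) β
    linarith
  have hABm0 : (0:ℝ) < A ^ (β / m) := by linarith
  rw [key, ← div_eq_mul_inv, div_le_div_iff₀ hABm0 hden]
  nlinarith [mul_le_mul_of_nonneg_left hge hC0, mul_le_mul_of_nonneg_left hABm1 hC0]
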